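/- With the generalized Apostol-Bernoulli poly-Daehee polynomials defined as above, for all n ≥ 0 one has (n+1) · 𝔅𝔇_{n,a}^{[k,m-1]}(γ,η;λ) = 𝔅𝔇_{n+1,a}^{[k,m-1]}(γ+1,η;λ) - 𝔅𝔇_{n+1,a}^{[k,m-1]}(γ,η;λ). -/

import Mathlib

/-!
Because `(1+x)^(γ+1) - (1+x)^γ = x (1+x)^γ`, subtracting the two generating-function identities
and cancelling the nonzero factor `Li_k(1-e^{-x}) (λe^x - Σ_{l<m} x^l/l!)^a` gives
`egf BD' - egf BD = x · egf BD`; the claim is the coefficient of `x^(n+1)/(n+1)!` of this.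
-/

open PowerSeries Finset

noncomputable section

variable (F : Type*) [Field F] [CharZero F]

/-- Exponential generating function `Σ c n * x^n / n!`. -/
def egf (c : ℕ → F) : PowerSeries F := PowerSeries.mk fun n => c n / n.factorial

/-- `log(1+x)` as a formal power series. -/
def logOnePlus : PowerSeries F := PowerSeries.mk fun n => if n = 0 then 0 else (-1) ^ (n + 1) / n

/-- `e^{-x}` as a formal power series. -/
def expNeg : PowerSeries F := PowerSeries.mk fun n => (-1) ^ n / n.factorial

/-- `Li_k(1 - e^{-x})`: since `(1-e^{-x})^m` has order `≥ m`, the `n`-th coefficient of the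
composition is the finite sum `Σ_{m=1}^{n} m^{-k} * coeff n ((1-e^{-x})^m)`. -/
def liComp (k : ℤ) : PowerSeries F :=
  PowerSeries.mk fun n => ∑ m ∈ Finset.range (n + 1),
    (if m = 0 then 0 else ((m : F) ^ k)⁻¹) * PowerSeries.coeff n ((1 - expNeg F) ^ m)

/-- `(1+x)^γ = Σ_j (γ)_j x^j/j!` with `(γ)_j = γ(γ-1)⋯(γ-j+1)` the falling factorial. -/
def onePlusPow (γ : F) : PowerSeries F := egf F fun j => ∏ i ∈ Finset.range j, (γ - i)

/-- Truncated exponential `Σ_{l<m} x^l/l!`. -/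
def truncExp (m : ℕ) : PowerSeries F :=
  PowerSeries.mk fun l => if l < m then ((l.factorial : F))⁻¹ else 0

/-- `λ e^x - Σ_{l<m} x^l/l!`, the denominator in the generalized Apostol-Bernoulli
generating function. -/
def bden (lam : F) (m : ℕ) : PowerSeries F := PowerSeries.C lam * PowerSeries.exp F - truncExp F m

section FormalSeries

variable {K : Type*} [Field K]

theorem coeff_egf (c : ℕ → K) (n : ℕ) : coeff n (egf K c) = c n / n.factorial :=
  coeff_mk _ _

theorem egf_injective [CharZero K] : Function.Injective (egf K) := fun c d h => funext fun n => by
  simpa [coeff_egf, Nat.factorial_ne_zero] using congrArg (coeff n) h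

theorem egf_sub (c d : ℕ → K) : egf K c - egf K d = egf K (c - d) := by
  ext n
  simp only [map_sub, coeff_egf, Pi.sub_apply, sub_div]

theorem X_mul_egf [CharZero K] (c : ℕ → K) : X * egf K c = egf K fun n => n * c (n - 1) := by
  ext n
  cases n with
  | zero => simp [coeff_egf]
  | succ n =>
    rw [coeff_succ_X_mul, coeff_egf, coeff_egf, Nat.factorial_succ, Nat.cast_mul,
      Nat.add_sub_cancel, mul_div_mul_left _ _ (Nat.cast_ne_zero.mpr n.succ_ne_zero)]

theorem prod_range_succ_add_one_sub {R : Type*} [CommRing R] (x : R) (n : ℕ) :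
    ∏ i ∈ range (n + 1), (x + 1 - i) - ∏ i ∈ range (n + 1), (x - i) =
      (n + 1) * ∏ i ∈ range n, (x - i) := by
  rw [prod_range_succ', prod_range_succ]
  simp only [Nat.cast_add_one, add_sub_add_right_eq_sub, Nat.cast_zero, sub_zero]
  ring

theorem onePlusPow_add_one_sub [CharZero K] (γ : K) :
    onePlusPow K (γ + 1) - onePlusPow K γ = X * onePlusPow K γ := by
  rw [onePlusPow, onePlusPow, egf_sub, X_mul_egf]
  congr 1
  ext n
  cases n with
  | zero => simp
  | succ n => simpa using prod_range_succ_add_one_sub γ n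

theorem coeff_one_liComp (k : ℤ) : coeff 1 (liComp K k) = 1 := by
  simp [liComp, sum_range_succ, expNeg]

theorem liComp_ne_zero (k : ℤ) : liComp K k ≠ 0 := fun h => by
  simpa [h] using coeff_one_liComp (K := K) k

theorem bden_ne_zero [CharZero K] (lam : K) {m : ℕ} (hm : 1 ≤ m) : bden K lam m ≠ 0 := by
  intro h
  have hcoeff_zero : coeff 0 (bden K lam m) = lam - 1 := by
    simp [bden, truncExp, Nat.lt_of_lt_of_le Nat.zero_lt_one hm]
  have hcoeff_m : coeff m (bden K lam m) = lam / m.factorial := by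
    simp [bden, truncExp, coeff_exp, div_eq_mul_inv]
  simp only [h, map_zero] at hcoeff_zero hcoeff_m
  have hlam : lam = 0 := by simpa [Nat.factorial_ne_zero, eq_comm] using hcoeff_m
  simp [hlam] at hcoeff_zero

end FormalSeries

theorem gabpdp_difference (k : ℤ) (m a : ℕ) (hm : 1 ≤ m)
    (γ η lam : F) (BD BD' : ℕ → F)
    (hBD : liComp F k * bden F lam m ^ a * egf F BD =
      onePlusPow F γ * logOnePlus F * PowerSeries.X ^ (m * a) *
        PowerSeries.rescale η (PowerSeries.exp F))
    (hBD' : liComp F k * bden F lam m ^ a * egf F BD' =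
      onePlusPow F (γ + 1) * logOnePlus F * PowerSeries.X ^ (m * a) *
        PowerSeries.rescale η (PowerSeries.exp F)) :
    ∀ n : ℕ, ((n : F) + 1) * BD n = BD' (n + 1) - BD (n + 1) := by
  intro n
  set D := liComp F k * bden F lam m ^ a
  have hD : D ≠ 0 := mul_ne_zero (liComp_ne_zero k) (pow_ne_zero a (bden_ne_zero lam hm))
  have hdiff : egf F BD' - egf F BD = X * egf F BD := mul_left_cancel₀ hD <| by
    calc D * (egf F BD' - egf F BD)
        = (onePlusPow F (γ + 1) - onePlusPow F γ) * logOnePlus F * X ^ (m * a) *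
            rescale η (exp F) := by rw [mul_sub, hBD', hBD]; ring
      _ = X * (D * egf F BD) := by rw [onePlusPow_add_one_sub, hBD]; ring
      _ = D * (X * egf F BD) := by ring
  rw [egf_sub, X_mul_egf] at hdiff
  simpa [eq_sub_iff_add_eq, add_comm] using (congrFun (egf_injective hdiff) (n + 1)).symm
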